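/- arXiv:2504.21006 — 6 statements merged into one kernel-verified Lean document; each statement's English description precedes it below -/
import Mathlib

section
/- Let r be a real number and let (p_m, q_m)_{m≥1} be integers with p_m ≥ 2, q_m ≥ 1 and 0 < |r·p_m − q_m| < p_m^{−m} for all m ≥ 1. Then for every natural number k, the series ∑_{m=1}^∞ m·p_m^{−m}·(2π·max{p_m, q_m})^k converges (i.e., the family of terms is summable). -/
/-!
Since `|r p_m - q_m| < p_m^{-m} ≤ 1`, we have `max p_m q_m ≤ (|r| + 1) p_m`, so the `m`-th term is at
most `m C^k p_m^{k-m} ≤ m (2C)^k 2^{-m}` once `m ≥ k`, where `C = 2π(|r| + 1)`; the series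
`∑ m 2^{-m}` converges.
-/

open Real Filter

theorem max_le_mul_of_abs_mul_sub_lt_one {r x y : ℝ} (hx : 1 ≤ x) (h : |r * x - y| < 1) :
    max x y ≤ (|r| + 1) * x := by
  have hrx : r * x ≤ |r| * x := mul_le_mul_of_nonneg_right (le_abs_self r) (by linarith)
  have hy : y - r * x < 1 := (abs_sub_lt_iff.mp h).2
  refine max_le ?_ ?_ <;> nlinarith [abs_nonneg r]

theorem inv_pow_mul_pow_le_of_two_le {x : ℝ} (hx : 2 ≤ x) {k m : ℕ} (hkm : k ≤ m) :
    (x ^ m)⁻¹ * x ^ k ≤ 2 ^ k * (1 / 2) ^ m := by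
  obtain ⟨j, rfl⟩ := Nat.exists_eq_add_of_le hkm
  have hx0 : x ≠ 0 := by positivity
  calc (x ^ (k + j))⁻¹ * x ^ k = (x ^ j)⁻¹ := by field_simp; ring
    _ ≤ (2 ^ j)⁻¹ := inv_anti₀ (by positivity) (pow_le_pow_left₀ zero_le_two hx j)
    _ = 2 ^ k * (1 / 2) ^ (k + j) := by rw [one_div, inv_pow, pow_add]; field_simp

theorem summable_mul_inv_pow_mul_pow {x y : ℕ → ℝ} {C : ℝ} (hx : ∀ᶠ m in atTop, 2 ≤ x m)
    (hy : ∀ᶠ m in atTop, ‖y m‖ ≤ C * x m) (k : ℕ) :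
    Summable fun m : ℕ => (m : ℝ) * (x m ^ m)⁻¹ * y m ^ k := by
  have hgeom : Summable fun m : ℕ => (2 * C) ^ k * ((m : ℝ) * (1 / 2) ^ m) := by
    simpa using (summable_pow_mul_geometric_of_norm_lt_one (R := ℝ) 1
      (r := 1 / 2) (by norm_num)).mul_left ((2 * C) ^ k)
  refine Summable.of_norm_bounded_eventually_nat hgeom ?_
  filter_upwards [hx, hy, eventually_ge_atTop k] with m hxm hym hkm
  have hx0 : 0 < x m := by linarith
  have hC : 0 ≤ C := nonneg_of_mul_nonneg_left ((norm_nonneg _).trans hym) hx0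
  calc ‖(m : ℝ) * (x m ^ m)⁻¹ * y m ^ k‖ = (m : ℝ) * (x m ^ m)⁻¹ * ‖y m‖ ^ k := by
        rw [norm_mul, norm_mul, norm_pow, Real.norm_natCast, norm_inv, norm_pow,
          Real.norm_of_nonneg hx0.le]
    _ ≤ (m : ℝ) * (x m ^ m)⁻¹ * (C * x m) ^ k := by gcongr
    _ = (m : ℝ) * C ^ k * ((x m ^ m)⁻¹ * x m ^ k) := by ring
    _ ≤ (m : ℝ) * C ^ k * (2 ^ k * (1 / 2) ^ m) := by
        gcongr ?_ * ?_
        exact inv_pow_mul_pow_le_of_two_le hxm hkm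
    _ = (2 * C) ^ k * ((m : ℝ) * (1 / 2) ^ m) := by ring

theorem stmt3_general (r : ℝ) (p q : ℕ → ℤ)
    (hp : ∀ m : ℕ, 1 ≤ m → 2 ≤ p m)
    (happrox : ∀ m : ℕ, 1 ≤ m →
      0 < |r * (p m : ℝ) - (q m : ℝ)| ∧
      |r * (p m : ℝ) - (q m : ℝ)| < (((p m : ℝ)) ^ m)⁻¹) :
    ∀ k : ℕ, Summable (fun m : ℕ =>
      (m : ℝ) * (((p m : ℝ)) ^ m)⁻¹ * (2 * π * max (p m : ℝ) (q m : ℝ)) ^ k) := by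
  have hp_ev : ∀ᶠ m in atTop, (2 : ℝ) ≤ p m :=
    (eventually_ge_atTop 1).mono fun m hm => by exact_mod_cast hp m hm
  refine summable_mul_inv_pow_mul_pow hp_ev ?_ (C := 2 * π * (|r| + 1))
  filter_upwards [hp_ev, eventually_ge_atTop 1] with m hpm hm
  have hpm1 : 1 ≤ (p m : ℝ) ^ m := one_le_pow₀ (by linarith)
  have hclose : |r * p m - q m| < 1 := (happrox m hm).2.trans_le (inv_le_one_of_one_le₀ hpm1)
  rw [Real.norm_of_nonneg (by positivity), mul_assoc (2 * π)]
  exact mul_le_mul_of_nonneg_left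
    (max_le_mul_of_abs_mul_sub_lt_one (by linarith) hclose) (by positivity)

/-- If `p_m ≥ 2`, `q_m ≥ 1` and `0 < |r p_m − q_m| < p_m^{−m}` for all `m ≥ 1`,
then for every natural `k` the series `∑_{m≥1} m p_m^{−m} (2π max{p_m, q_m})^k` converges. -/
theorem stmt3 (r : ℝ) (p q : ℕ → ℤ)
    (hp : ∀ m : ℕ, 1 ≤ m → 2 ≤ p m) (hq : ∀ m : ℕ, 1 ≤ m → 1 ≤ q m)
    (happrox : ∀ m : ℕ, 1 ≤ m →
      0 < |r * (p m : ℝ) - (q m : ℝ)| ∧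
      |r * (p m : ℝ) - (q m : ℝ)| < (((p m : ℝ)) ^ m)⁻¹) :
    ∀ k : ℕ, Summable (fun m : ℕ =>
      (m : ℝ) * (((p m : ℝ)) ^ m)⁻¹ * (2 * π * max (p m : ℝ) (q m : ℝ)) ^ k) :=
  stmt3_general r p q hp happrox
end

section
/- Let r be a real number and let (p_m, q_m)_{m≥1} be integers with p_m ≥ 2, q_m ≥ 1 and 0 < |r·p_m − q_m| < p_m^{−m} for all m ≥ 1, and set λ_m := r·p_m − q_m. Define X : ℝ → ℝ³ by X(t) = (r·t, t, x₃(t)) where x₃(t) := ∑_{m=1}^∞ (m/(2π·p_m^m·λ_m))·sin(2π·λ_m·t). Then X(0) = 0 and X satisfies the differential equation X'(t) = h(X(t)) for all t, where h(z₁, z₂, z₃) = (r, 1, ∑_{m=1}^∞ m·p_m^{−m}·cos(2π(p_m·z₁ − q_m·z₂))). -/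
open Real

/-! Along `X`, `p_m z₁ − q_m z₂ = λ_m t`, so (as `λ_m ≠ 0`) the `m`-th term of `x₃` is an
antiderivative of the `m`-th term of `h ∘ X`. Since `p_m ≥ 2`, the differentiated series is
dominated by `∑ m 2^{-m}`, which justifies differentiating term by term. -/

lemma hasDerivAt_div_mul_sin {a c : ℝ} (hc : a ≠ 0 → c ≠ 0) (t : ℝ) :
    HasDerivAt (fun s => a / c * sin (c * s)) (a * cos (c * t)) t := by
  have hsin : HasDerivAt (fun s => sin (c * s)) (cos (c * t) * c) t := by
    simpa using ((hasDerivAt_id t).const_mul c).sin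
  refine (hsin.const_mul (a / c)).congr_deriv ?_
  by_cases ha : a = 0
  · simp [ha]
  · field_simp [hc ha]

theorem hasDerivAt_tsum_div_mul_sin {a c : ℕ → ℝ} (ha : Summable fun m => |a m|)
    (hc : ∀ m, a m ≠ 0 → c m ≠ 0) (t : ℝ) :
    HasDerivAt (fun s => ∑' m, a m / c m * sin (c m * s)) (∑' m, a m * cos (c m * t)) t := by
  have hbound : ∀ m s, ‖a m * cos (c m * s)‖ ≤ |a m| := fun m s => by
    simpa [abs_mul] using mul_le_mul_of_nonneg_left (abs_cos_le_one (c m * s)) (abs_nonneg (a m))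
  have hsummable_zero : Summable fun m => a m / c m * sin (c m * 0) := by simp
  exact hasDerivAt_tsum ha (fun m s => hasDerivAt_div_mul_sin (hc m) s) hbound hsummable_zero t

lemma summable_abs_nat_mul_inv_pow {p : ℕ → ℝ} (hp : ∀ m, 1 ≤ m → 2 ≤ p m) :
    Summable fun m : ℕ => |(m : ℝ) * (p m ^ m)⁻¹| := by
  have hgeom : Summable fun m : ℕ => (m : ℝ) * (1 / 2 : ℝ) ^ m := by
    simpa using summable_pow_mul_geometric_of_norm_lt_one (R := ℝ) 1 (r := 1 / 2) (by norm_num)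
  refine hgeom.of_nonneg_of_le (fun _ => abs_nonneg _) fun m => ?_
  rcases Nat.eq_zero_or_pos m with rfl | hm
  · simp
  have hpm : (2 : ℝ) ^ m ≤ p m ^ m := pow_le_pow_left₀ (by norm_num) (hp m hm) m
  have hp0 : 0 ≤ p m := by linarith [hp m hm]
  rw [abs_of_nonneg (by positivity), one_div, inv_pow]
  gcongr

theorem stmt9_general (r : ℝ) (p q : ℕ → ℤ)
    (hp : ∀ m : ℕ, 1 ≤ m → 2 ≤ p m)
    (happrox : ∀ m : ℕ, 1 ≤ m →
      0 < |r * (p m : ℝ) - (q m : ℝ)| ∧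
      |r * (p m : ℝ) - (q m : ℝ)| < (((p m : ℝ)) ^ m)⁻¹)
    (X : ℝ → ℝ × ℝ × ℝ)
    (hX : ∀ t : ℝ, X t = (r * t, t,
      ∑' m : ℕ, (m : ℝ) / (2 * π * ((p m : ℝ)) ^ m * (r * (p m : ℝ) - (q m : ℝ))) *
        Real.sin (2 * π * (r * (p m : ℝ) - (q m : ℝ)) * t)))
    (h : ℝ × ℝ × ℝ → ℝ × ℝ × ℝ)
    (hh : ∀ z : ℝ × ℝ × ℝ, h z =
      (r, 1, ∑' m : ℕ, (m : ℝ) * (((p m : ℝ)) ^ m)⁻¹ *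
        Real.cos (2 * π * ((p m : ℝ) * z.1 - (q m : ℝ) * z.2.1)))) :
    X 0 = 0 ∧ ∀ t : ℝ, HasDerivAt X (h (X t)) t := by
  set a : ℕ → ℝ := fun m => (m : ℝ) * (((p m : ℝ)) ^ m)⁻¹
  set c : ℕ → ℝ := fun m => 2 * π * (r * (p m : ℝ) - (q m : ℝ))
  have ha : Summable fun m => |a m| :=
    summable_abs_nat_mul_inv_pow fun m hm => by exact_mod_cast hp m hm
  have hc : ∀ m, a m ≠ 0 → c m ≠ 0 := fun m ham => by
    have hm : 1 ≤ m := Nat.one_le_iff_ne_zero.mpr (by rintro rfl; simp [a] at ham)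
    exact mul_ne_zero (mul_ne_zero two_ne_zero pi_ne_zero) (abs_pos.mp (happrox m hm).1)
  have hXeq : X = fun s => (r * s, s, ∑' m, a m / c m * sin (c m * s)) := by
    funext s
    simp only [hX, a, c]
    congr 3 with m
    congr 1
    simp only [div_eq_mul_inv, mul_inv]
    ring
  refine ⟨by simp [hXeq, Prod.ext_iff], fun t => ?_⟩
  have hx₃ := hasDerivAt_tsum_div_mul_sin ha hc t
  have hcos : h (X t) = (r, 1, ∑' m, a m * cos (c m * t)) := by
    simp only [hh, hXeq, a, c]
    congr 3 with m
    ring_nf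
  rw [hcos, hXeq]
  simpa using ((hasDerivAt_id t).const_mul r).prodMk ((hasDerivAt_id t).prodMk hx₃)

/-- With `λ_m = r p_m − q_m`, `X(t) = (r t, t, x₃(t))` where
`x₃(t) = ∑_{m≥1} (m/(2π p_m^m λ_m)) sin(2π λ_m t)`, one has `X(0) = 0` and `X' = h ∘ X`,
where `h(z₁, z₂, z₃) = (r, 1, ∑_{m≥1} m p_m^{−m} cos(2π(p_m z₁ − q_m z₂)))`. -/
theorem stmt9 (r : ℝ) (p q : ℕ → ℤ)
    (hp : ∀ m : ℕ, 1 ≤ m → 2 ≤ p m) (hq : ∀ m : ℕ, 1 ≤ m → 1 ≤ q m)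
    (happrox : ∀ m : ℕ, 1 ≤ m →
      0 < |r * (p m : ℝ) - (q m : ℝ)| ∧
      |r * (p m : ℝ) - (q m : ℝ)| < (((p m : ℝ)) ^ m)⁻¹)
    (X : ℝ → ℝ × ℝ × ℝ)
    (hX : ∀ t : ℝ, X t = (r * t, t,
      ∑' m : ℕ, (m : ℝ) / (2 * π * ((p m : ℝ)) ^ m * (r * (p m : ℝ) - (q m : ℝ))) *
        Real.sin (2 * π * (r * (p m : ℝ) - (q m : ℝ)) * t)))
    (h : ℝ × ℝ × ℝ → ℝ × ℝ × ℝ)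
    (hh : ∀ z : ℝ × ℝ × ℝ, h z =
      (r, 1, ∑' m : ℕ, (m : ℝ) * (((p m : ℝ)) ^ m)⁻¹ *
        Real.cos (2 * π * ((p m : ℝ) * z.1 - (q m : ℝ) * z.2.1)))) :
    X 0 = 0 ∧ ∀ t : ℝ, HasDerivAt X (h (X t)) t :=
  stmt9_general r p q hp happrox X hX h hh
end

section
/- Let r be a real number and let (p_m, q_m)_{m≥1} be integers with p_m ≥ 2, q_m ≥ 1 and 0 < |r·p_m − q_m| < p_m^{−m} for all m ≥ 1, and set λ_m := r·p_m − q_m. Define x₃(t) := ∑_{m=1}^∞ (m/(2π·p_m^m·λ_m))·sin(2π·λ_m·t). Then lim_{t→+∞} x₃(t)/t = 0. -/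
set_option maxHeartbeats 1000000


open Real Filter

private lemma aux_tendsto (f : ℕ → ℝ → ℝ) (B : ℕ → ℝ) (hB0 : ∀ m, 0 ≤ B m)
    (hB : ∀ m, ∀ t : ℝ, 1 ≤ t → |f m t| ≤ B m)
    (hlin : ∀ m, ∀ t : ℝ, 1 ≤ t → |f m t| ≤ t * ((m : ℝ) * (1/2) ^ m)) :
    Tendsto (fun t : ℝ => (∑' m, f m t) / t) atTop (nhds 0) := by
  have hh : Summable (fun m : ℕ => (m : ℝ) * (1/2) ^ m) := by
    have := summable_pow_mul_geometric_of_norm_lt_one (R := ℝ) 1 (r := (1/2 : ℝ))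
      (by rw [Real.norm_eq_abs, abs_of_pos (by norm_num : (0:ℝ) < 1/2)]; norm_num)
    simpa using this
  rw [NormedAddCommGroup.tendsto_nhds_zero]
  intro ε hε
  have htail : Tendsto (fun M : ℕ => ∑' k : ℕ, ((k + M : ℕ) : ℝ) * (1/2) ^ (k + M))
      atTop (nhds 0) := by
    simpa using tendsto_sum_nat_add (fun m : ℕ => (m : ℝ) * (1/2) ^ m)
  obtain ⟨M, hM⟩ := (htail.eventually_lt_const (half_pos hε)).exists
  set C : ℝ := ∑ m ∈ Finset.range M, B m with hC
  have hC0 : 0 ≤ C := Finset.sum_nonneg fun m _ => hB0 m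
  filter_upwards [eventually_ge_atTop (1 : ℝ), eventually_gt_atTop (2 * C / ε)]
    with t ht1 ht2
  have ht0 : (0 : ℝ) < t := lt_of_lt_of_le one_pos ht1
  have habs : Summable (fun m : ℕ => |f m t|) :=
    Summable.of_nonneg_of_le (fun m => abs_nonneg _) (fun m => hlin m t ht1)
      (hh.mul_left t)
  have hsum : Summable (fun m : ℕ => f m t) := habs.of_abs
  have hsplit := Summable.sum_add_tsum_nat_add M hsum
  have htailabs : Summable (fun k : ℕ => |f (k + M) t|) :=
    (summable_nat_add_iff M).mpr habs
  have htailsum : Summable (fun k : ℕ => f (k + M) t) :=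
    (summable_nat_add_iff M).mpr hsum
  have hhtail : Summable (fun k : ℕ => t * (((k + M : ℕ) : ℝ) * (1/2) ^ (k + M))) := by
    exact ((summable_nat_add_iff M).mpr hh).mul_left t
  have hbound : |∑' m, f m t| ≤ C + t * (ε / 2) := by
    calc |∑' m, f m t| = |(∑ m ∈ Finset.range M, f m t) + ∑' k, f (k + M) t| := by
          rw [hsplit]
      _ ≤ |∑ m ∈ Finset.range M, f m t| + |∑' k, f (k + M) t| := abs_add_le _ _
      _ ≤ C + t * (ε / 2) := by
          have h1 : |∑ m ∈ Finset.range M, f m t| ≤ C := by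
            refine (Finset.abs_sum_le_sum_abs _ _).trans ?_
            exact Finset.sum_le_sum fun m _ => hB m t ht1
          have h2 : |∑' k, f (k + M) t| ≤ t * (ε / 2) := by
            have h3 : |∑' k, f (k + M) t| ≤ ∑' k, |f (k + M) t| := by
              simpa [Real.norm_eq_abs] using
                norm_tsum_le_tsum_norm (f := fun k => f (k + M) t)
                  (by simpa [Real.norm_eq_abs] using htailabs)
            have h4 : (∑' k, |f (k + M) t|) ≤
                ∑' k, t * (((k + M : ℕ) : ℝ) * (1/2) ^ (k + M)) :=
              Summable.tsum_le_tsum (fun k => hlin (k + M) t ht1) htailabs hhtail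
            have h5 : (∑' k, t * (((k + M : ℕ) : ℝ) * (1/2) ^ (k + M)))
                = t * ∑' k, ((k + M : ℕ) : ℝ) * (1/2) ^ (k + M) := tsum_mul_left
            have h6 : t * (∑' k : ℕ, ((k + M : ℕ) : ℝ) * (1/2) ^ (k + M)) ≤ t * (ε / 2) :=
              mul_le_mul_of_nonneg_left hM.le ht0.le
            linarith
          linarith
  rw [Real.norm_eq_abs, abs_div, abs_of_pos ht0, div_lt_iff₀ ht0]
  have h7 : 2 * C < t * ε := by
    have := (div_lt_iff₀ hε).mp ht2
    linarith
  nlinarith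

/-- With `λ_m = r p_m − q_m` and
`x₃(t) = ∑_{m≥1} (m/(2π p_m^m λ_m)) sin(2π λ_m t)`, one has `x₃(t)/t → 0` as `t → +∞`. -/
theorem stmt10 (r : ℝ) (p q : ℕ → ℤ)
    (hp : ∀ m : ℕ, 1 ≤ m → 2 ≤ p m) (hq : ∀ m : ℕ, 1 ≤ m → 1 ≤ q m)
    (happrox : ∀ m : ℕ, 1 ≤ m →
      0 < |r * (p m : ℝ) - (q m : ℝ)| ∧
      |r * (p m : ℝ) - (q m : ℝ)| < (((p m : ℝ)) ^ m)⁻¹) :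
    Tendsto (fun t : ℝ =>
      (∑' m : ℕ, (m : ℝ) / (2 * π * ((p m : ℝ)) ^ m * (r * (p m : ℝ) - (q m : ℝ))) *
        Real.sin (2 * π * (r * (p m : ℝ) - (q m : ℝ)) * t)) / t)
      atTop (nhds 0) := by
  have hπ : (0 : ℝ) < π := Real.pi_pos
  set f : ℕ → ℝ → ℝ := fun m t =>
    (m : ℝ) / (2 * π * ((p m : ℝ)) ^ m * (r * (p m : ℝ) - (q m : ℝ))) *
      Real.sin (2 * π * (r * (p m : ℝ) - (q m : ℝ)) * t) with hf
  set B : ℕ → ℝ := fun m =>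
    (m : ℝ) / (2 * π * ((p m : ℝ)) ^ m * |r * (p m : ℝ) - (q m : ℝ)|) with hBdef
  have key : ∀ m : ℕ, 1 ≤ m → ∀ t : ℝ,
      (2 : ℝ) ≤ (p m : ℝ) ∧ 0 < |r * (p m : ℝ) - (q m : ℝ)| := by
    intro m hm t
    constructor
    · exact_mod_cast hp m hm
    · exact (happrox m hm).1
  apply aux_tendsto f B
  · intro m
    rcases Nat.eq_zero_or_pos m with h0 | hm
    · subst h0; simp [B]
    · obtain ⟨h2p, hlam⟩ := key m hm 0
      have hpm : (0 : ℝ) < ((p m : ℝ)) ^ m := pow_pos (by linarith) m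
      exact div_nonneg (Nat.cast_nonneg m) (by positivity)
  · intro m t ht
    rcases Nat.eq_zero_or_pos m with h0 | hm
    · subst h0; simp [f, B]
    · obtain ⟨h2p, hlam⟩ := key m hm t
      have hpm : (0 : ℝ) < ((p m : ℝ)) ^ m := pow_pos (by linarith) m
      have hden : (0 : ℝ) < 2 * π * ((p m : ℝ)) ^ m * |r * (p m : ℝ) - (q m : ℝ)| := by
        positivity
      have : |f m t| = (m : ℝ) / (2 * π * ((p m : ℝ)) ^ m * |r * (p m : ℝ) - (q m : ℝ)|)
          * |Real.sin (2 * π * (r * (p m : ℝ) - (q m : ℝ)) * t)| := by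
        rw [hf, abs_mul, abs_div, abs_mul, abs_mul, Nat.abs_cast,
          abs_of_pos (mul_pos two_pos hπ), abs_of_pos hpm]
      rw [this, hBdef]
      exact mul_le_of_le_one_right (div_nonneg (Nat.cast_nonneg m) hden.le)
        (Real.abs_sin_le_one _)
  · intro m t ht
    rcases Nat.eq_zero_or_pos m with h0 | hm
    · subst h0; simp [f]
    · obtain ⟨h2p, hlam⟩ := key m hm t
      have ht0 : (0 : ℝ) < t := lt_of_lt_of_le one_pos ht
      have hpm : (0 : ℝ) < ((p m : ℝ)) ^ m := pow_pos (by linarith) m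
      have hden : (0 : ℝ) < 2 * π * ((p m : ℝ)) ^ m * |r * (p m : ℝ) - (q m : ℝ)| := by
        positivity
      have habsf : |f m t| = (m : ℝ) / (2 * π * ((p m : ℝ)) ^ m * |r * (p m : ℝ) - (q m : ℝ)|)
          * |Real.sin (2 * π * (r * (p m : ℝ) - (q m : ℝ)) * t)| := by
        rw [hf, abs_mul, abs_div, abs_mul, abs_mul, Nat.abs_cast,
          abs_of_pos (mul_pos two_pos hπ), abs_of_pos hpm]
      have hsin : |Real.sin (2 * π * (r * (p m : ℝ) - (q m : ℝ)) * t)|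
          ≤ 2 * π * |r * (p m : ℝ) - (q m : ℝ)| * t := by
        refine (Real.abs_sin_le_abs).trans ?_
        rw [abs_mul, abs_mul, abs_of_pos (mul_pos two_pos hπ), abs_of_pos ht0]
      have h1 : |f m t| ≤ (m : ℝ) / ((p m : ℝ)) ^ m * t := by
        rw [habsf]
        calc (m : ℝ) / (2 * π * ((p m : ℝ)) ^ m * |r * (p m : ℝ) - (q m : ℝ)|)
              * |Real.sin (2 * π * (r * (p m : ℝ) - (q m : ℝ)) * t)|
            ≤ (m : ℝ) / (2 * π * ((p m : ℝ)) ^ m * |r * (p m : ℝ) - (q m : ℝ)|)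
              * (2 * π * |r * (p m : ℝ) - (q m : ℝ)| * t) :=
              mul_le_mul_of_nonneg_left hsin (div_nonneg (Nat.cast_nonneg m) hden.le)
          _ = (m : ℝ) / ((p m : ℝ)) ^ m * t := by
              field_simp
      have h2 : (m : ℝ) / ((p m : ℝ)) ^ m ≤ (m : ℝ) * (1/2) ^ m := by
        rw [div_eq_mul_inv]
        gcongr
        have h2m : (2 : ℝ) ^ m ≤ ((p m : ℝ)) ^ m := pow_le_pow_left₀ (by norm_num) h2p m
        rw [one_div, inv_pow]
        exact inv_anti₀ (pow_pos two_pos m) h2m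
      calc |f m t| ≤ (m : ℝ) / ((p m : ℝ)) ^ m * t := h1
        _ ≤ ((m : ℝ) * (1/2) ^ m) * t := mul_le_mul_of_nonneg_right h2 ht0.le
        _ = t * ((m : ℝ) * (1/2) ^ m) := mul_comm _ _
end

section
/- Let r be a real number and let (p_m, q_m)_{m≥1} be integers with p_m ≥ 2, q_m ≥ 1 and 0 < |r·p_m − q_m| < p_m^{−m} for all m ≥ 1, and set λ_m := r·p_m − q_m. Define X : ℝ → ℝ³ by X(t) = (r·t, t, x₃(t)) where x₃(t) := ∑_{m=1}^∞ (m/(2π·p_m^m·λ_m))·sin(2π·λ_m·t). Then the rotation vector exists in the weak sense and equals ρ = (r, 1, 0): lim_{t→+∞} X(t)/t = (r, 1, 0). -/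
open Real Filter

/-- With `λ_m = r p_m − q_m` and `X(t) = (r t, t, x₃(t))` where
`x₃(t) = ∑_{m≥1} (m/(2π p_m^m λ_m)) sin(2π λ_m t)`, the rotation vector exists in the weak
sense and equals `ρ = (r, 1, 0)`: `(X(t) − X(0))/t → (r, 1, 0)` as `t → +∞`. -/
theorem stmt11 (r : ℝ) (p q : ℕ → ℤ)
    (hp : ∀ m : ℕ, 1 ≤ m → 2 ≤ p m) (hq : ∀ m : ℕ, 1 ≤ m → 1 ≤ q m)
    (happrox : ∀ m : ℕ, 1 ≤ m →
      0 < |r * (p m : ℝ) - (q m : ℝ)| ∧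
      |r * (p m : ℝ) - (q m : ℝ)| < (((p m : ℝ)) ^ m)⁻¹)
    (X : ℝ → ℝ × ℝ × ℝ)
    (hX : ∀ t : ℝ, X t = (r * t, t,
      ∑' m : ℕ, (m : ℝ) / (2 * π * ((p m : ℝ)) ^ m * (r * (p m : ℝ) - (q m : ℝ))) *
        Real.sin (2 * π * (r * (p m : ℝ) - (q m : ℝ)) * t))) :
    Tendsto (fun t : ℝ => t⁻¹ • (X t - X 0)) atTop (nhds ((r, 1, 0) : ℝ × ℝ × ℝ)) := by
  set lam : ℕ → ℝ := fun m => r * (p m : ℝ) - (q m : ℝ) with hlam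
  set c : ℕ → ℝ := fun m => (m : ℝ) / (2 * π * ((p m : ℝ)) ^ m * lam m) with hc
  -- the parametrized terms, divided by t
  set F : ℝ → ℕ → ℝ := fun t m => t⁻¹ * (c m * Real.sin (2 * π * lam m * t)) with hF
  have hF0 : ∀ t, F t 0 = 0 := by
    intro t; simp [hF, hc]
  -- per-term bound for m ≥ 1, t ≥ 1
  have hbound : ∀ m : ℕ, 1 ≤ m → ∀ t : ℝ, 1 ≤ t → |F t m| ≤ (m : ℝ) * (2 : ℝ)⁻¹ ^ m := by
    intro m hm t ht
    have hpm : (2 : ℝ) ≤ (p m : ℝ) := by exact_mod_cast hp m hm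
    have hppos : (0 : ℝ) < (p m : ℝ) := by linarith
    have hppow : (0 : ℝ) < ((p m : ℝ)) ^ m := pow_pos hppos m
    have hlpos : 0 < |lam m| := (happrox m hm).1
    have htpos : (0 : ℝ) < t := lt_of_lt_of_le one_pos ht
    have hsin : |Real.sin (2 * π * lam m * t)| ≤ |2 * π * lam m * t| :=
      Real.abs_sin_le_abs
    have h2pi : (0 : ℝ) < 2 * π := by positivity
    have habs : |F t m| ≤ t⁻¹ * (((m : ℝ) / (2 * π * ((p m : ℝ)) ^ m * |lam m|)) *
        (2 * π * |lam m| * t)) := by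
      rw [hF]
      rw [abs_mul, abs_mul]
      have h1 : |t⁻¹| = t⁻¹ := abs_of_pos (by positivity)
      have h2 : |c m| = (m : ℝ) / (2 * π * ((p m : ℝ)) ^ m * |lam m|) := by
        rw [hc]
        rw [abs_div, abs_mul, abs_mul]
        rw [abs_of_pos h2pi, abs_of_pos hppow, abs_of_nonneg (Nat.cast_nonneg m)]
      have h3 : |Real.sin (2 * π * lam m * t)| ≤ 2 * π * |lam m| * t := by
        calc |Real.sin (2 * π * lam m * t)| ≤ |2 * π * lam m * t| := hsin
          _ = 2 * π * |lam m| * t := by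
              rw [abs_mul, abs_mul, abs_of_pos h2pi, abs_of_pos htpos]
      rw [h1, h2]
      have hcnn : 0 ≤ (m : ℝ) / (2 * π * ((p m : ℝ)) ^ m * |lam m|) := by positivity
      have := mul_le_mul_of_nonneg_left h3 hcnn
      exact mul_le_mul_of_nonneg_left this (by positivity)
    have heq : t⁻¹ * (((m : ℝ) / (2 * π * ((p m : ℝ)) ^ m * |lam m|)) *
        (2 * π * |lam m| * t)) = (m : ℝ) / ((p m : ℝ)) ^ m := by
      field_simp
    rw [heq] at habs
    refine habs.trans ?_
    rw [div_eq_mul_inv]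
    refine mul_le_mul_of_nonneg_left ?_ (Nat.cast_nonneg m)
    rw [← inv_pow]
    exact pow_le_pow_left₀ (by positivity) (by
      rw [inv_le_inv₀ hppos (by norm_num)]; exact hpm) m
  -- summable dominating series
  have hsum : Summable (fun m : ℕ => (m : ℝ) * (2 : ℝ)⁻¹ ^ m) := by
    simpa using summable_pow_mul_geometric_of_norm_lt_one 1 (r := (2:ℝ)⁻¹) (by norm_num)
  -- pointwise limits
  have hlim : ∀ m : ℕ, Tendsto (fun t => F t m) atTop (nhds 0) := by
    intro m
    refine squeeze_zero_norm' (a := fun t => |c m| * t⁻¹) ?_ ?_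
    · filter_upwards [eventually_gt_atTop (0:ℝ)] with t ht
      rw [hF]
      simp only [Real.norm_eq_abs, abs_mul]
      rw [abs_of_pos (inv_pos.mpr ht)]
      calc t⁻¹ * (|c m| * |Real.sin (2 * π * lam m * t)|)
          ≤ t⁻¹ * (|c m| * 1) := by
            refine mul_le_mul_of_nonneg_left ?_ (by positivity)
            exact mul_le_mul_of_nonneg_left (Real.abs_sin_le_one _) (abs_nonneg _)
        _ = |c m| * t⁻¹ := by ring
    · simpa using tendsto_inv_atTop_zero.const_mul |c m|
  -- the tsum limit
  have htsum : Tendsto (fun t => ∑' m, F t m) atTop (nhds 0) := by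
    have := tendsto_tsum_of_dominated_convergence (f := F) (g := fun _ => (0:ℝ))
      (bound := fun m => (m : ℝ) * (2 : ℝ)⁻¹ ^ m) hsum hlim ?_
    · simpa using this
    · filter_upwards [eventually_ge_atTop (1:ℝ)] with t ht m
      rcases Nat.eq_zero_or_pos m with rfl | hm
      · simp [hF0 t]
      · simpa using hbound m hm t ht
  -- X 0 = 0
  have hX0 : X 0 = (0, 0, 0) := by
    rw [hX 0]
    simp
  -- third component of t⁻¹ • X t equals ∑' m, F t m
  have hthird : ∀ t : ℝ, t⁻¹ * (∑' m, c m * Real.sin (2 * π * lam m * t)) = ∑' m, F t m := by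
    intro t
    rw [hF]
    exact (tsum_mul_left).symm
  -- assemble
  have key : ∀ᶠ t in atTop, (fun t : ℝ => t⁻¹ • (X t - X 0)) t
      = (r, 1, ∑' m, F t m) := by
    filter_upwards [eventually_gt_atTop (0:ℝ)] with t ht
    rw [hX0, hX t]
    have hne : t ≠ 0 := ne_of_gt ht
    ext <;> simp [Prod.smul_def, ← hthird t, hc, hlam, mul_comm, hne] <;>
      field_simp
  rw [tendsto_congr' key, nhds_prod_eq, nhds_prod_eq]
  exact (tendsto_const_nhds.prodMk (tendsto_const_nhds.prodMk htsum))
end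

section
/- Let r be a real number and let (p_m, q_m)_{m≥1} be integers with p_m ≥ 2, q_m ≥ 1, satisfying 0 < |r·p_m − q_m| < p_m^{−m} for all m ≥ 1 and p_m^{−m} < |r·p_{m−1} − q_{m−1}| for all m ≥ 2, and set λ_m := r·p_m − q_m and f(s) := ∑_{m=1}^∞ m·p_m^{−m}·cos(2π·λ_m·s). Then for every n ≥ 1, lim_{t→+∞} (1/t)·∫_0^t f(s)·cos(2π·λ_n·s) ds = (n/2)·p_n^{−n}. -/
open Real Filter MeasureTheory intervalIntegral Topology

/-! By the product-to-sum formula, the running mean `t⁻¹ ∫₀ᵗ cos (a s) cos (b s) ds` reduces to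
means of `cos (c s)`, which equal `sin (c t) / (c t) → 0` for `c ≠ 0`; so it tends to `1/2` when
`a = b ≠ 0` and to `0` when `|a| ≠ |b|`. The coefficients `m p_m^{-m}` are summable, so by
dominated convergence the mean passes through the series defining `f`. The hypotheses make
`|λ_m|` strictly decreasing for `m ≥ 1`, hence only the term `m = n` survives. -/

lemma tendsto_inv_mul_of_abs_le {h : ℝ → ℝ} {C : ℝ} (hC : ∀ t, |h t| ≤ C) :
    Tendsto (fun t => t⁻¹ * h t) atTop (𝓝 0) := by
  refine squeeze_zero_norm' ?_ (by simpa using tendsto_inv_atTop_zero.const_mul C)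
  filter_upwards [eventually_ge_atTop 0] with t ht
  rw [norm_mul, norm_inv, Real.norm_of_nonneg ht, mul_comm]
  exact mul_le_mul_of_nonneg_right (hC t) (inv_nonneg.mpr ht)

lemma integral_cos_mul {c : ℝ} (hc : c ≠ 0) (t : ℝ) :
    ∫ s in (0 : ℝ)..t, cos (c * s) = sin (c * t) / c := by
  rw [integral_comp_mul_left cos hc, integral_cos, mul_zero, sin_zero, sub_zero, smul_eq_mul,
    inv_mul_eq_div]

lemma tendsto_mean_cos (c : ℝ) :
    Tendsto (fun t => t⁻¹ * ∫ s in (0 : ℝ)..t, cos (c * s)) atTop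
      (𝓝 (if c = 0 then 1 else 0)) := by
  split_ifs with hc
  · refine tendsto_const_nhds.congr' ?_
    filter_upwards [eventually_ne_atTop 0] with t ht
    simp [hc, ht]
  · simp_rw [integral_cos_mul hc]
    refine tendsto_inv_mul_of_abs_le (C := |c|⁻¹) fun t => ?_
    rw [abs_div, div_eq_mul_inv]
    exact mul_le_of_le_one_left (inv_nonneg.mpr (abs_nonneg c)) (abs_sin_le_one _)

lemma tendsto_mean_cos_mul_cos (a b : ℝ) :
    Tendsto (fun t => t⁻¹ * ∫ s in (0 : ℝ)..t, cos (a * s) * cos (b * s)) atTop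
      (𝓝 (((if a - b = 0 then 1 else 0) + (if a + b = 0 then 1 else 0)) / 2)) := by
  have hprod (s : ℝ) :
      cos (a * s) * cos (b * s) = (cos ((a - b) * s) + cos ((a + b) * s)) / 2 := by
    rw [sub_mul, add_mul, ← two_mul_cos_mul_cos]; ring
  have hint (c t : ℝ) : IntervalIntegrable (fun s => cos (c * s)) volume 0 t :=
    (continuous_cos.comp (continuous_const_mul c)).intervalIntegrable 0 t
  refine (((tendsto_mean_cos (a - b)).add (tendsto_mean_cos (a + b))).div_const 2).congr
    fun t => ?_
  simp_rw [hprod, intervalIntegral.integral_div, integral_add (hint _ t) (hint _ t)]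
  ring

lemma tendsto_mean_tsum {g : ℕ → ℝ → ℝ} {bound ℓ : ℕ → ℝ} (hg : ∀ m, Continuous (g m))
    (hbound : ∀ m s, |g m s| ≤ bound m) (hsum : Summable bound)
    (hℓ : ∀ m, Tendsto (fun t => t⁻¹ * ∫ s in (0 : ℝ)..t, g m s) atTop (𝓝 (ℓ m))) :
    Tendsto (fun t => t⁻¹ * ∫ s in (0 : ℝ)..t, ∑' m, g m s) atTop (𝓝 (∑' m, ℓ m)) := by
  have hswap (t : ℝ) : ∫ s in (0 : ℝ)..t, ∑' m, g m s = ∑' m, ∫ s in (0 : ℝ)..t, g m s :=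
    (intervalIntegral.hasSum_integral_of_dominated_convergence (fun m _ => bound m)
      (fun m => (hg m).aestronglyMeasurable) (fun m => ae_of_all _ fun s _ => hbound m s)
      (ae_of_all _ fun _ _ => hsum) intervalIntegrable_const
      (ae_of_all _ fun s _ => (hsum.of_norm_bounded fun m => hbound m s).hasSum)).tsum_eq.symm
  simp_rw [hswap, ← tsum_mul_left]
  refine tendsto_tsum_of_dominated_convergence hsum hℓ ?_
  filter_upwards [eventually_gt_atTop 0] with t ht m
  have hI : ‖∫ s in (0 : ℝ)..t, g m s‖ ≤ bound m * |t - 0| :=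
    norm_integral_le_of_norm_le_const fun s _ => hbound m s
  rw [sub_zero, abs_of_pos ht] at hI
  rw [norm_mul, norm_inv, Real.norm_of_nonneg ht.le, inv_mul_le_iff₀ ht, mul_comm]
  exact hI

lemma tendsto_mean_tsum_mul_cos_mul_cos {a ω : ℕ → ℝ} {n : ℕ} (ha : Summable a) (hωn : ω n ≠ 0)
    (hsep : ∀ m ≠ n, a m = 0 ∨ |ω m| ≠ |ω n|) :
    Tendsto (fun t => t⁻¹ * ∫ s in (0 : ℝ)..t, (∑' m, a m * cos (ω m * s)) * cos (ω n * s))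
      atTop (𝓝 (a n / 2)) := by
  have hfactor (s : ℝ) : (∑' m, a m * cos (ω m * s)) * cos (ω n * s) =
      ∑' m, a m * (cos (ω m * s) * cos (ω n * s)) := by
    simp_rw [← mul_assoc, tsum_mul_right]
  have hbound (m : ℕ) (s : ℝ) : |a m * (cos (ω m * s) * cos (ω n * s))| ≤ |a m| := by
    rw [abs_mul, abs_mul]
    exact mul_le_of_le_one_right (abs_nonneg _)
      (mul_le_one₀ (abs_cos_le_one _) (abs_nonneg _) (abs_cos_le_one _))
  have hlim := tendsto_mean_tsum (fun m => by fun_prop) hbound ha.abs fun m =>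
    ((tendsto_mean_cos_mul_cos (ω m) (ω n)).const_mul (a m)).congr fun t => by
      rw [intervalIntegral.integral_const_mul, mul_left_comm]
  simp_rw [hfactor]
  convert hlim using 2
  rw [tsum_eq_single n fun m hm => ?_]
  · have h2 : ω n + ω n ≠ 0 := by rwa [← two_mul, mul_ne_zero_iff_left two_ne_zero]
    simp [h2, div_eq_mul_inv]
  · rcases hsep m hm with h | h
    · simp [h]
    · have h1 : ω m - ω n ≠ 0 := fun h' => h (by rw [sub_eq_zero.mp h'])
      have h2 : ω m + ω n ≠ 0 := fun h' => h (by rw [eq_neg_of_add_eq_zero_left h', abs_neg])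
      simp [h1, h2]

lemma summable_natCast_mul_inv_pow {x : ℕ → ℝ} {c : ℝ} (hc : 1 < c)
    (hx : ∀ m, 1 ≤ m → c ≤ x m) : Summable fun m : ℕ => (m : ℝ) * (x m ^ m)⁻¹ := by
  have hc0 : 0 < c := one_pos.trans hc
  have hgeom : Summable fun m : ℕ => (m : ℝ) * c⁻¹ ^ m := by
    simpa using summable_pow_mul_geometric_of_norm_lt_one 1 (r := c⁻¹)
      (by rwa [norm_inv, Real.norm_of_nonneg hc0.le, inv_lt_one₀ hc0])
  refine hgeom.of_norm_bounded fun m => ?_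
  rcases Nat.eq_zero_or_pos m with rfl | hm
  · simp
  · rw [norm_mul, Real.norm_natCast, norm_inv, norm_pow, ← inv_pow]
    gcongr
    exact (hx m hm).trans (le_abs_self _)

theorem stmt14_general (r : ℝ) (p q : ℕ → ℤ)
    (hp : ∀ m : ℕ, 1 ≤ m → 2 ≤ p m)
    (happrox : ∀ m : ℕ, 1 ≤ m →
      0 < |r * (p m : ℝ) - (q m : ℝ)| ∧
      |r * (p m : ℝ) - (q m : ℝ)| < (((p m : ℝ)) ^ m)⁻¹)
    (hdec : ∀ m : ℕ, 2 ≤ m →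
      (((p m : ℝ)) ^ m)⁻¹ < |r * (p (m - 1) : ℝ) - (q (m - 1) : ℝ)|) :
    ∀ n : ℕ, 1 ≤ n →
      Tendsto (fun t : ℝ => t⁻¹ *
        ∫ s in (0 : ℝ)..t,
          (∑' m : ℕ, (m : ℝ) * (((p m : ℝ)) ^ m)⁻¹ *
            Real.cos (2 * π * (r * (p m : ℝ) - (q m : ℝ)) * s)) *
          Real.cos (2 * π * (r * (p n : ℝ) - (q n : ℝ)) * s))
        atTop (nhds ((n : ℝ) / 2 * (((p n : ℝ)) ^ n)⁻¹)) := by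
  intro n hn
  set e : ℕ → ℝ := fun m => r * p m - q m
  have hanti : StrictAntiOn (fun m => |e m|) (Set.Ici 1) :=
    strictAntiOn_Ici_of_lt_pred fun m hm => by
      rw [Order.pred_eq_sub_one]
      exact (happrox m hm.le).2.trans (hdec m hm)
  have hsum := summable_natCast_mul_inv_pow (x := fun m => (p m : ℝ)) one_lt_two
    fun m hm => by exact_mod_cast hp m hm
  have hsep (m : ℕ) (hmn : m ≠ n) :
      (m : ℝ) * ((p m : ℝ) ^ m)⁻¹ = 0 ∨ |2 * π * e m| ≠ |2 * π * e n| := by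
    rcases Nat.eq_zero_or_pos m with rfl | hm
    · simp
    · rw [abs_mul, abs_mul _ (e n), (mul_right_injective₀ (by positivity)).ne_iff]
      exact Or.inr (hanti.injOn.ne (Set.mem_Ici.mpr hm) (Set.mem_Ici.mpr hn) hmn)
  have hωn : 2 * π * e n ≠ 0 := mul_ne_zero (by positivity) (abs_pos.mp (happrox n hn).1)
  convert tendsto_mean_tsum_mul_cos_mul_cos hsum hωn hsep using 2
  ring

/-- With the full approximation scheme, `λ_m = r p_m − q_m` and
`f(s) = ∑_{m≥1} m p_m^{−m} cos(2π λ_m s)`, for every `n ≥ 1`,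
`(1/t) ∫_0^t f(s) cos(2π λ_n s) ds → (n/2) p_n^{−n}` as `t → +∞`. -/
theorem stmt14 (r : ℝ) (p q : ℕ → ℤ)
    (hp : ∀ m : ℕ, 1 ≤ m → 2 ≤ p m) (hq : ∀ m : ℕ, 1 ≤ m → 1 ≤ q m)
    (happrox : ∀ m : ℕ, 1 ≤ m →
      0 < |r * (p m : ℝ) - (q m : ℝ)| ∧
      |r * (p m : ℝ) - (q m : ℝ)| < (((p m : ℝ)) ^ m)⁻¹)
    (hdec : ∀ m : ℕ, 2 ≤ m →
      (((p m : ℝ)) ^ m)⁻¹ < |r * (p (m - 1) : ℝ) - (q (m - 1) : ℝ)|) :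
    ∀ n : ℕ, 1 ≤ n →
      Tendsto (fun t : ℝ => t⁻¹ *
        ∫ s in (0 : ℝ)..t,
          (∑' m : ℕ, (m : ℝ) * (((p m : ℝ)) ^ m)⁻¹ *
            Real.cos (2 * π * (r * (p m : ℝ) - (q m : ℝ)) * s)) *
          Real.cos (2 * π * (r * (p n : ℝ) - (q n : ℝ)) * s))
        atTop (nhds ((n : ℝ) / 2 * (((p n : ℝ)) ^ n)⁻¹)) :=
  stmt14_general r p q hp happrox hdec
end

section
/- Let r be a real number and let (p_m, q_m)_{m≥1} be integers with p_m ≥ 2, q_m ≥ 1, satisfying 0 < |r·p_m − q_m| < p_m^{−m} for all m ≥ 1 and p_m^{−m} < |r·p_{m−1} − q_{m−1}| for all m ≥ 2, and set λ_m := r·p_m − q_m. Define x₃(t) := ∑_{m=1}^∞ (m/(2π·p_m^m·λ_m))·sin(2π·λ_m·t). Then the function t ↦ x₃(t) is unbounded on [0, ∞): sup_{t≥0} |x₃(t)| = +∞. -/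
/-!
If a sine series `f t = ∑ aₘ sin (ωₘ t)` has `aₘ ωₘ ≥ 0` and `∑ aₘ ωₘ < ∞`, it may be integrated
termwise, and every term of `∫₀ᵀ f = ∑ aₘ (1 - cos (ωₘ T)) / ωₘ` is nonnegative. Taking
`T = π / |ωₙ|` isolates the term `2 |aₙ| / |ωₙ|`, while `|f| ≤ C` bounds the integral by
`C π / |ωₙ|`; hence `|aₙ| ≤ π C / 2` for every `n`. For `x₃` one has `aₘ ωₘ = m / pₘ^m`, which is
summable since `pₘ ≥ 2`, whereas `|aₘ| = m / (2π pₘ^m |λₘ|) > m / (2π)` is unbounded.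
-/

open Real intervalIntegral

theorem integral_sin_mul (c T : ℝ) :
    ∫ t in (0 : ℝ)..T, sin (c * t) = (1 - cos (c * T)) / c := by
  rcases eq_or_ne c 0 with rfl | hc
  · simp
  · rw [integral_comp_mul_left (fun x => sin x) hc, integral_sin, smul_eq_mul, mul_zero, cos_zero,
      inv_mul_eq_div]

theorem abs_mul_sin_mul_le (a ω t : ℝ) : |a * sin (ω * t)| ≤ |a * ω| * |t| := by
  rw [abs_mul, abs_mul, mul_assoc, ← abs_mul ω]
  exact mul_le_mul_of_nonneg_left abs_sin_le_abs (abs_nonneg a)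

theorem hasSum_integral_tsum_mul_sin {a ω : ℕ → ℝ} (hs : Summable fun m => |a m * ω m|)
    {T : ℝ} (hT : 0 ≤ T) :
    HasSum (fun m => a m * ((1 - cos (ω m * T)) / ω m))
      (∫ t in (0 : ℝ)..T, ∑' m, a m * sin (ω m * t)) := by
  simp only [← integral_sin_mul, ← integral_const_mul]
  refine hasSum_integral_of_dominated_convergence (fun m _ => |a m * ω m| * T)
    (fun m => by fun_prop) (fun m => Filter.Eventually.of_forall fun t ht => ?_)
    (Filter.Eventually.of_forall fun _ _ => hs.mul_right T) intervalIntegrable_const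
    (Filter.Eventually.of_forall fun t _ =>
      (Summable.of_norm_bounded (hs.mul_right |t|) fun m => abs_mul_sin_mul_le _ _ _).hasSum)
  rw [Set.uIoc_of_le hT] at ht
  calc ‖a m * sin (ω m * t)‖ ≤ |a m * ω m| * |t| := abs_mul_sin_mul_le _ _ _
    _ ≤ |a m * ω m| * T := by rw [abs_of_pos ht.1]; gcongr; exact ht.2

theorem abs_le_pi_div_two_mul_of_abs_tsum_mul_sin_le {a ω : ℕ → ℝ} {C : ℝ}
    (hs : Summable fun m => a m * ω m) (hpos : ∀ m, 0 ≤ a m * ω m)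
    (hC : ∀ t, 0 ≤ t → |∑' m, a m * sin (ω m * t)| ≤ C) {n : ℕ} (hn : ω n ≠ 0) :
    |a n| ≤ π / 2 * C := by
  have hdiv : ∀ m, 0 ≤ a m / ω m := fun m => div_nonneg_iff.2 (mul_nonneg_iff.1 (hpos m))
  have hcos : cos (ω n * (π / |ω n|)) = -1 := by
    rcases abs_choice (ω n) with h | h
    · rw [h, mul_div_cancel₀ _ hn, cos_pi]
    · rw [h, mul_div_assoc', mul_comm, mul_div_assoc, div_neg_self hn, mul_neg_one, cos_neg,
        cos_pi]
  set T := π / |ω n|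
  have hT : 0 ≤ T := by positivity
  have hsum := hasSum_integral_tsum_mul_sin (hs.congr fun m => (abs_of_nonneg (hpos m)).symm) hT
  have hlow : 2 * |a n| / |ω n| ≤ ∫ t in (0 : ℝ)..T, ∑' m, a m * sin (ω m * t) := by
    refine le_of_eq_of_le ?_ (le_hasSum hsum n fun m _ => ?_)
    · rw [hcos, mul_div_assoc, ← abs_div, abs_of_nonneg (hdiv n)]
      ring
    · rw [mul_div_left_comm]
      exact mul_nonneg (sub_nonneg.2 (cos_le_one _)) (hdiv m)
  have hup : ∫ t in (0 : ℝ)..T, ∑' m, a m * sin (ω m * t) ≤ C * π / |ω n| := by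
    refine (le_abs_self _).trans ((norm_integral_le_of_norm_le_const
      (f := fun t => ∑' m, a m * sin (ω m * t)) fun t ht =>
        hC t (Set.uIoc_of_le hT ▸ ht).1.le).trans_eq ?_)
    rw [sub_zero, abs_of_nonneg hT, mul_div_assoc]
  have hle := (div_le_div_iff_of_pos_right (by positivity)).1 (hlow.trans hup)
  linarith

theorem natCast_div_pow_nonneg {p : ℕ → ℝ} (hp : ∀ m, 1 ≤ m → 2 ≤ p m) (m : ℕ) :
    0 ≤ (m : ℝ) / p m ^ m := by
  rcases Nat.eq_zero_or_pos m with rfl | hm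
  · simp
  · have hpm := hp m hm
    positivity

theorem summable_natCast_div_pow {p : ℕ → ℝ} (hp : ∀ m, 1 ≤ m → 2 ≤ p m) :
    Summable fun m : ℕ => (m : ℝ) / p m ^ m := by
  have hgeom : Summable fun m : ℕ => (m : ℝ) * 2⁻¹ ^ m := by
    simpa using summable_pow_mul_geometric_of_norm_lt_one 1 (r := (2⁻¹ : ℝ)) (by norm_num)
  refine hgeom.of_nonneg_of_le (natCast_div_pow_nonneg hp) fun m => ?_
  rcases Nat.eq_zero_or_pos m with rfl | hm
  · simp
  · rw [inv_pow, ← div_eq_mul_inv]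
    gcongr
    exact hp m hm

theorem div_two_pi_lt_abs_div {x P l : ℝ} (hx : 0 < x) (hP : 0 < P) (hl : 0 < |l|)
    (hlP : |l| < P⁻¹) : x / (2 * π) < |x / (2 * π * P * l)| := by
  have hPl : P * |l| < 1 := by simpa [mul_inv_cancel₀ hP.ne'] using mul_lt_mul_of_pos_left hlP hP
  rw [abs_div, abs_mul, abs_of_pos hx, abs_of_pos (by positivity), mul_assoc]
  exact div_lt_div_of_pos_left hx (by positivity) (mul_lt_of_lt_one_right (by positivity) hPl)

theorem stmt17_general (r : ℝ) (p q : ℕ → ℤ)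
    (hp : ∀ m : ℕ, 1 ≤ m → 2 ≤ p m)
    (happrox : ∀ m : ℕ, 1 ≤ m →
      0 < |r * (p m : ℝ) - (q m : ℝ)| ∧
      |r * (p m : ℝ) - (q m : ℝ)| < (((p m : ℝ)) ^ m)⁻¹)
    (x₃ : ℝ → ℝ)
    (hx₃ : ∀ t : ℝ, x₃ t =
      ∑' m : ℕ, (m : ℝ) / (2 * π * ((p m : ℝ)) ^ m * (r * (p m : ℝ) - (q m : ℝ))) *
        Real.sin (2 * π * (r * (p m : ℝ) - (q m : ℝ)) * t)) :
    ∀ C : ℝ, ∃ t : ℝ, 0 ≤ t ∧ C < |x₃ t| := by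
  intro C
  by_contra! hC
  set l : ℕ → ℝ := fun m => r * p m - q m
  have hp' : ∀ m, 1 ≤ m → (2 : ℝ) ≤ p m := fun m hm => by exact_mod_cast hp m hm
  have hl : ∀ m, 1 ≤ m → l m ≠ 0 := fun m hm => abs_pos.1 (happrox m hm).1
  have hprod : ∀ m : ℕ,
      (m : ℝ) / (2 * π * (p m : ℝ) ^ m * l m) * (2 * π * l m) = m / p m ^ m := by
    intro m
    rcases Nat.eq_zero_or_pos m with rfl | hm
    · simp
    · field_simp [hl m hm]
  set n := ⌈π ^ 2 * C⌉₊ + 1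
  have hn : 1 ≤ n := Nat.le_add_left 1 _
  have hupper := abs_le_pi_div_two_mul_of_abs_tsum_mul_sin_le (ω := fun m => 2 * π * l m)
    ((summable_natCast_div_pow hp').congr fun m => (hprod m).symm)
    (fun m => hprod m ▸ natCast_div_pow_nonneg hp' m) (fun t ht => hx₃ t ▸ hC t ht)
    (n := n) (mul_ne_zero (by positivity) (hl n hn))
  have hlower := div_two_pi_lt_abs_div (Nat.cast_pos.2 hn)
    (pow_pos (by linarith [hp' n hn]) n) (happrox n hn).1 (happrox n hn).2
  have hceil : π ^ 2 * C < n := by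
    simp only [n]
    push_cast
    linarith [Nat.le_ceil (π ^ 2 * C)]
  have hlt := (div_lt_iff₀ (by positivity)).1 (hlower.trans_le hupper)
  linarith [show π / 2 * C * (2 * π) = π ^ 2 * C by ring]

/-- With the full approximation scheme, `λ_m = r p_m − q_m` and
`x₃(t) = ∑_{m≥1} (m/(2π p_m^m λ_m)) sin(2π λ_m t)`, the function `x₃` is unbounded on
`[0, ∞)`: `sup_{t≥0} |x₃(t)| = +∞`, i.e. for every `C` there is `t ≥ 0` with `C < |x₃(t)|`. -/
theorem stmt17 (r : ℝ) (p q : ℕ → ℤ)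
    (hp : ∀ m : ℕ, 1 ≤ m → 2 ≤ p m) (hq : ∀ m : ℕ, 1 ≤ m → 1 ≤ q m)
    (happrox : ∀ m : ℕ, 1 ≤ m →
      0 < |r * (p m : ℝ) - (q m : ℝ)| ∧
      |r * (p m : ℝ) - (q m : ℝ)| < (((p m : ℝ)) ^ m)⁻¹)
    (hdec : ∀ m : ℕ, 2 ≤ m →
      (((p m : ℝ)) ^ m)⁻¹ < |r * (p (m - 1) : ℝ) - (q (m - 1) : ℝ)|)
    (x₃ : ℝ → ℝ)
    (hx₃ : ∀ t : ℝ, x₃ t =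
      ∑' m : ℕ, (m : ℝ) / (2 * π * ((p m : ℝ)) ^ m * (r * (p m : ℝ) - (q m : ℝ))) *
        Real.sin (2 * π * (r * (p m : ℝ) - (q m : ℝ)) * t)) :
    ∀ C : ℝ, ∃ t : ℝ, 0 ≤ t ∧ C < |x₃ t| :=
  stmt17_general r p q hp happrox x₃ hx₃
end
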